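/- arXiv:2309.05084 — 2 statements merged into one kernel-verified Lean document; each statement's English description precedes it below -/
import Mathlib

section
/- If two distribution functions F₁ and F₂ on ℝ satisfy F₁(y) - 0.5·m₁(y) = F₂(y) - 0.5·m₂(y) for all y, where m_i(y) is the jump of F_i at y (m_i(y) = F_i(y) - F_i(y⁻)), then F₁ = F₂; i.e., the mid-CDF uniquely determines the distribution. -/
open Set Filter Function Topology

/-! A monotone function jumps at only countably many points, and where neither `F₁` nor `F₂`
jumps the mid-CDFs are the CDFs themselves, so `F₁ = F₂` off a countable set. The complement of
a countable subset of `ℝ` is dense, and two right-continuous functions agreeing on a dense set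
agree everywhere, since every point is a limit from the right of points of that set. -/

theorem Monotone.countable_setOf_leftLim_ne {α β : Type*} [LinearOrder α] [TopologicalSpace α]
    [OrderTopology α] [ConditionallyCompleteLinearOrder β] [TopologicalSpace β]
    [OrderTopology β] [SecondCountableTopology β] {f : α → β} (hf : Monotone f) :
    {x | leftLim f x ≠ f x}.Countable :=
  hf.countable_not_continuousAt.mono
    fun x (hx : leftLim f x ≠ f x) (hcont : ContinuousAt f x) =>
      hx (ContinuousWithinAt.leftLim_eq hcont.continuousWithinAt)

theorem eq_of_continuousWithinAt_Ici_of_eqOn_dense {α β : Type*} [LinearOrder α]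
    [TopologicalSpace α] [OrderTopology α] [DenselyOrdered α] [NoMaxOrder α]
    [TopologicalSpace β] [T2Space β] {f g : α → β} {s : Set α}
    (hf : ∀ y, ContinuousWithinAt f (Ici y) y) (hg : ∀ y, ContinuousWithinAt g (Ici y) y)
    (hs : Dense s) (hfg : EqOn f g s) : f = g := by
  funext y
  have hy : y ∈ closure (Ioi y ∩ s) :=
    closure_minimal (hs.open_subset_closure_inter isOpen_Ioi) isClosed_closure <| by
      rw [closure_Ioi]; exact self_mem_Ici
  have : (𝓝[Ioi y ∩ s] y).NeBot := mem_closure_iff_nhdsWithin_neBot.1 hy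
  have hsub : Ioi y ∩ s ⊆ Ici y := inter_subset_left.trans Ioi_subset_Ici_self
  refine tendsto_nhds_unique ((hf y).mono hsub).tendsto ?_
  exact ((hg y).mono hsub).tendsto.congr' <|
    eventually_nhdsWithin_of_forall fun x hx => (hfg hx.2).symm

theorem midCDF_determines_CDF_general (F₁ F₂ : ℝ → ℝ)
    (hm₁ : Monotone F₁) (hm₂ : Monotone F₂)
    (hrc₁ : ∀ y, ContinuousWithinAt F₁ (Ici y) y)
    (hrc₂ : ∀ y, ContinuousWithinAt F₂ (Ici y) y)
    (hmid : ∀ y : ℝ,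
      F₁ y - 0.5 * (F₁ y - leftLim F₁ y) = F₂ y - 0.5 * (F₂ y - leftLim F₂ y)) :
    F₁ = F₂ := by
  have hjumps : ({x | leftLim F₁ x ≠ F₁ x} ∪ {x | leftLim F₂ x ≠ F₂ x}).Countable :=
    hm₁.countable_setOf_leftLim_ne.union hm₂.countable_setOf_leftLim_ne
  refine eq_of_continuousWithinAt_Ici_of_eqOn_dense hrc₁ hrc₂ (hjumps.dense_compl ℝ)
    fun x hx => ?_
  simp only [compl_union, mem_inter_iff, mem_compl_iff, mem_ofPred_eq, not_not] at hx
  linarith [hmid x, hx.1, hx.2]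

/-- If two CDFs F₁, F₂ (right-continuous, nondecreasing, with limits 0 at -∞ and 1 at +∞)
have the same mid-CDF G_i(y) = F_i(y) - 0.5 * (F_i(y) - F_i(y⁻)), then F₁ = F₂:
the mid-CDF uniquely determines the distribution. -/
theorem midCDF_determines_CDF (F₁ F₂ : ℝ → ℝ)
    (hm₁ : Monotone F₁) (hm₂ : Monotone F₂)
    (hrc₁ : ∀ y, ContinuousWithinAt F₁ (Ici y) y)
    (hrc₂ : ∀ y, ContinuousWithinAt F₂ (Ici y) y)
    (hbot₁ : Tendsto F₁ atBot (nhds 0)) (htop₁ : Tendsto F₁ atTop (nhds 1))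
    (hbot₂ : Tendsto F₂ atBot (nhds 0)) (htop₂ : Tendsto F₂ atTop (nhds 1))
    (hmid : ∀ y : ℝ,
      F₁ y - 0.5 * (F₁ y - leftLim F₁ y) = F₂ y - 0.5 * (F₂ y - leftLim F₂ y)) :
    F₁ = F₂ :=
  midCDF_determines_CDF_general F₁ F₂ hm₁ hm₂ hrc₁ hrc₂ hmid
end

section
/- Let Y be discrete with finite support and let G be its mid-CDF. If the conditional mid-CDF of Y given Z, G_{Y|Z=z}(y) = F_{Y|Z=z}(y) - 0.5·P(Y = y | Z = z), does not depend on z for all y, then the conditional CDF F_{Y|Z=z}(y) does not depend on z for all y, i.e., Y is independent of Z. -/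
/-!
The conditional mid-CDF `x ↦ F_z(x) - ½ P(Y = x | Z = z)` tends to `F_z(y)` as `x ↓ y`, because
`P(Y ≤ x | Z = z)` is right-continuous and the atoms `P(Y = x | Z = z)` are bounded by
`P(y < Y ≤ x | Z = z) → 0`. Hence the conditional CDF is the right limit of the conditional
mid-CDF, and inherits its independence of `z`. Summing `P(Y ≤ y, Z = w) = F(y) P(Z = w)` over the
countably many values `w` of `Z` then gives `P(Y ≤ y) = F(y)`, which is the factorization.
-/

open MeasureTheory Set Filter Topology ENNReal

section RightLimits

variable {Ω : Type*} [MeasurableSpace Ω] (ν : Measure Ω) [IsFiniteMeasure ν]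
  {Y : Ω → ℝ}

theorem tendsto_measureReal_le_nhdsGT (hY : Measurable Y) (y : ℝ) :
    Tendsto (fun x ↦ ν.real {ω | Y ω ≤ x}) (𝓝[>] y) (𝓝 (ν.real {ω | Y ω ≤ y})) := by
  have hInter : ⋂ x > y, {ω | Y ω ≤ x} = {ω | Y ω ≤ y} := by
    ext ω
    simpa using ⟨le_of_forall_gt_imp_ge_of_dense, fun h x hx ↦ h.trans hx.le⟩
  have h := tendsto_measure_biInter_gt (μ := ν) (s := fun x ↦ {ω | Y ω ≤ x}) (a := y)
    (fun _ _ ↦ (hY measurableSet_Iic).nullMeasurableSet)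
    (fun _ _ _ hij _ hω ↦ hω.trans hij) ⟨y + 1, by linarith, measure_ne_top _ _⟩
  rw [hInter] at h
  exact (ENNReal.tendsto_toReal (measure_ne_top _ _)).comp h

theorem tendsto_measureReal_eq_nhdsGT (hY : Measurable Y) (y : ℝ) :
    Tendsto (fun x ↦ ν.real {ω | Y ω = x}) (𝓝[>] y) (𝓝 0) := by
  have hgap : Tendsto (fun x ↦ ν.real {ω | Y ω ≤ x} - ν.real {ω | Y ω ≤ y}) (𝓝[>] y) (𝓝 0) := by
    simpa using (tendsto_measureReal_le_nhdsGT ν hY y).sub_const (ν.real {ω | Y ω ≤ y})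
  refine tendsto_of_tendsto_of_tendsto_of_le_of_le' tendsto_const_nhds hgap
    (Eventually.of_forall fun _ ↦ measureReal_nonneg) ?_
  filter_upwards [self_mem_nhdsWithin] with x (hx : y < x)
  rw [← measureReal_sdiff (s₁ := {ω | Y ω ≤ x}) (s₂ := {ω | Y ω ≤ y})
    (fun ω (h : Y ω ≤ y) ↦ h.trans hx.le) (hY measurableSet_Iic)]
  refine measureReal_mono fun ω (h : Y ω = x) ↦ ⟨h.le, ?_⟩
  simp [h, hx]

theorem tendsto_midCDF_nhdsGT (hY : Measurable Y) (y : ℝ) :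
    Tendsto (fun x ↦ ν.real {ω | Y ω ≤ x} - 0.5 * ν.real {ω | Y ω = x}) (𝓝[>] y)
      (𝓝 (ν.real {ω | Y ω ≤ y})) := by
  simpa using (tendsto_measureReal_le_nhdsGT ν hY y).sub
    ((tendsto_measureReal_eq_nhdsGT ν hY y).const_mul 0.5)

end RightLimits

theorem ENNReal.ofReal_toReal_div_mul {a b : ℝ≥0∞} (ha : a ≠ ∞) (hb₀ : b ≠ 0) (hb : b ≠ ∞) :
    ENNReal.ofReal (a.toReal / b.toReal) * b = a := by
  rw [← ENNReal.toReal_div, ENNReal.ofReal_toReal (ENNReal.div_ne_top ha hb₀),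
    ENNReal.div_mul_cancel hb₀ hb]

section Fibers

variable {Ω β : Type*} [MeasurableSpace Ω] {μ : Measure Ω} {Z : Ω → β}

theorem exists_measure_preimage_singleton_ne_zero [NeZero μ] (hZ : (range Z).Countable) :
    ∃ z, μ (Z ⁻¹' {z}) ≠ 0 := by
  by_contra! h
  have := (measure_preimage_eq_zero_iff_of_countable (μ := μ) hZ).2 fun z _ ↦ h z
  exact NeZero.ne μ (by simpa using this)

variable [MeasurableSpace β] [MeasurableSingletonClass β]

theorem tsum_measure_inter_preimage_singleton (hZ : Measurable Z) (hZc : (range Z).Countable)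
    (A : Set Ω) : ∑' w : range Z, μ (A ∩ Z ⁻¹' {(w : β)}) = μ A := by
  have h := tsum_measure_preimage_singleton (μ := μ.restrict A) hZc
    fun w _ ↦ hZ (measurableSet_singleton w)
  simpa [Measure.restrict_apply (hZ (measurableSet_singleton _)), inter_comm] using h

theorem measure_inter_preimage_singleton_eq_mul [IsProbabilityMeasure μ] (hZ : Measurable Z)
    (hZc : (range Z).Countable) {A : Set Ω} {c : ℝ≥0∞}
    (h : ∀ w, μ (Z ⁻¹' {w}) ≠ 0 → μ (A ∩ Z ⁻¹' {w}) = c * μ (Z ⁻¹' {w})) (z : β) :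
    μ (A ∩ Z ⁻¹' {z}) = μ A * μ (Z ⁻¹' {z}) := by
  have h' : ∀ w, μ (A ∩ Z ⁻¹' {w}) = c * μ (Z ⁻¹' {w}) := by
    intro w
    by_cases hw : μ (Z ⁻¹' {w}) = 0
    · rw [hw, mul_zero, measure_mono_null inter_subset_right hw]
    · exact h w hw
  have hA : μ A = c := by
    calc μ A = ∑' w : range Z, μ (A ∩ Z ⁻¹' {(w : β)}) :=
          (tsum_measure_inter_preimage_singleton hZ hZc A).symm
      _ = c * ∑' w : range Z, μ (univ ∩ Z ⁻¹' {(w : β)}) := by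
          simp only [h', univ_inter, ENNReal.tsum_mul_left]
      _ = c := by rw [tsum_measure_inter_preimage_singleton hZ hZc, measure_univ, mul_one]
  rw [hA, h']

end Fibers

theorem indep_of_cond_midCDF_const_general {Ω : Type*} [MeasurableSpace Ω]
    (μ : Measure Ω) [IsProbabilityMeasure μ]
    (Y Z : Ω → ℝ) (hY : Measurable Y) (hZ : Measurable Z)
    (hZcount : (Set.range Z).Countable)
    (F m : ℝ → ℝ → ℝ)
    (hF : ∀ z y, F z y =
      (μ {ω | Y ω ≤ y ∧ Z ω = z}).toReal / (μ {ω | Z ω = z}).toReal)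
    (hm : ∀ z y, m z y =
      (μ {ω | Y ω = y ∧ Z ω = z}).toReal / (μ {ω | Z ω = z}).toReal)
    (hmid : ∀ z z' : ℝ, 0 < μ {ω | Z ω = z} → 0 < μ {ω | Z ω = z'} →
      ∀ y : ℝ, F z y - 0.5 * m z y = F z' y - 0.5 * m z' y) :
    (∀ z z' : ℝ, 0 < μ {ω | Z ω = z} → 0 < μ {ω | Z ω = z'} →
      ∀ y : ℝ, F z y = F z' y) ∧
    (∀ y z : ℝ, μ {ω | Y ω ≤ y ∧ Z ω = z} = μ {ω | Y ω ≤ y} * μ {ω | Z ω = z}) := by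
  have hlim (z y : ℝ) : Tendsto (fun x ↦ F z x - 0.5 * m z x) (𝓝[>] y) (𝓝 (F z y)) := by
    have h := (tendsto_midCDF_nhdsGT (μ.restrict {ω | Z ω = z}) hY y).div_const
      (μ {ω | Z ω = z}).toReal
    simpa only [Measure.real, Measure.restrict_apply (measurableSet_le hY measurable_const),
      Measure.restrict_apply (measurableSet_eq_fun hY measurable_const), ← ofPred_and,
      sub_div, mul_div_assoc, ← hF, ← hm] using h
  have hFconst : ∀ z z' : ℝ, 0 < μ {ω | Z ω = z} → 0 < μ {ω | Z ω = z'} →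
      ∀ y : ℝ, F z y = F z' y := fun z z' hz hz' y ↦
    tendsto_nhds_unique ((hlim z y).congr (hmid z z' hz hz')) (hlim z' y)
  refine ⟨hFconst, fun y z ↦ ?_⟩
  obtain ⟨z₀, hz₀⟩ := exists_measure_preimage_singleton_ne_zero (μ := μ) hZcount
  refine measure_inter_preimage_singleton_eq_mul hZ hZcount (c := ENNReal.ofReal (F z₀ y))
    (fun w hw ↦ ?_) z
  rw [← hFconst w z₀ (pos_iff_ne_zero.2 hw) (pos_iff_ne_zero.2 hz₀), hF]
  exact (ENNReal.ofReal_toReal_div_mul (measure_ne_top _ _) hw (measure_ne_top _ _)).symm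

/-- Let Y be discrete with finite range and Z discrete with countable range. If the
conditional mid-CDF of Y given Z = z, G_{Y|Z=z}(y) = F_{Y|Z=z}(y) - 0.5 * P(Y = y | Z = z),
does not depend on z (over the support of Z), then the conditional CDF F_{Y|Z=z}(y) does
not depend on z, and Y is independent of Z (joint probabilities factorize). -/
theorem indep_of_cond_midCDF_const {Ω : Type*} [MeasurableSpace Ω]
    (μ : Measure Ω) [IsProbabilityMeasure μ]
    (Y Z : Ω → ℝ) (hY : Measurable Y) (hZ : Measurable Z)
    (hYfin : (Set.range Y).Finite) (hZcount : (Set.range Z).Countable)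
    (F m : ℝ → ℝ → ℝ)
    (hF : ∀ z y, F z y =
      (μ {ω | Y ω ≤ y ∧ Z ω = z}).toReal / (μ {ω | Z ω = z}).toReal)
    (hm : ∀ z y, m z y =
      (μ {ω | Y ω = y ∧ Z ω = z}).toReal / (μ {ω | Z ω = z}).toReal)
    (hmid : ∀ z z' : ℝ, 0 < μ {ω | Z ω = z} → 0 < μ {ω | Z ω = z'} →
      ∀ y : ℝ, F z y - 0.5 * m z y = F z' y - 0.5 * m z' y) :
    (∀ z z' : ℝ, 0 < μ {ω | Z ω = z} → 0 < μ {ω | Z ω = z'} →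
      ∀ y : ℝ, F z y = F z' y) ∧
    (∀ y z : ℝ, μ {ω | Y ω ≤ y ∧ Z ω = z} = μ {ω | Y ω ≤ y} * μ {ω | Z ω = z}) :=
  indep_of_cond_midCDF_const_general μ Y Z hY hZ hZcount F m hF hm hmid
end
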